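/- Let σ ∈ (0,1) and let λ, μ > 0 and let b be a scalar. Viewing the Balakrishnan formula at the level of scalar symbols, the commutator identity reads: λ^σ b - b μ^σ = (sin(πσ)/π) ∫_0^∞ m^σ (λ+m)^{-1} (λ b - b μ) (μ+m)^{-1} dm; i.e., λ^σ - μ^σ = (sin(πσ)/π)(λ - μ) ∫_0^∞ m^σ (λ+m)^{-1}(μ+m)^{-1} dm for all λ, μ > 0. -/

import Mathlib

/-!
Partial fractions give `(λ - μ) m^σ (λ+m)⁻¹(μ+m)⁻¹ = λ m^{σ-1}(λ+m)⁻¹ - μ m^{σ-1}(μ+m)⁻¹`, so it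
suffices to know `∫₀^∞ m^{σ-1}(a+m)⁻¹ dm = a^{σ-1} π / sin(πσ)`. For that, write
`(a+m)⁻¹ = ∫₀^∞ e^{-(a+m)t} dt` and swap the integrals (Tonelli): the inner `m`-integral is
`Γ(σ) t^{-σ}`, the outer one is then `Γ(σ) Γ(1-σ) a^{σ-1}`, and `Γ(σ) Γ(1-σ) = π / sin(πσ)`.
-/

open MeasureTheory Real Set

theorem lintegral_rpow_mul_exp_neg_mul_Ioi {s c : ℝ} (hs : 0 < s) (hc : 0 < c) :
    ∫⁻ t in Ioi (0 : ℝ), ENNReal.ofReal (t ^ (s - 1) * exp (-(c * t))) =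
      ENNReal.ofReal (c ^ (-s) * Gamma s) := by
  have hval := integral_rpow_mul_exp_neg_mul_Ioi hs hc
  rw [one_div, inv_rpow hc.le, ← rpow_neg hc.le] at hval
  have hint : IntegrableOn (fun t : ℝ => t ^ (s - 1) * exp (-(c * t))) (Ioi 0) :=
    .of_integral_ne_zero (by rw [hval]; positivity)
  rw [← ofReal_integral_eq_lintegral_ofReal hint, hval]
  filter_upwards [ae_restrict_mem measurableSet_Ioi] with t (ht : 0 < t)
  positivity

theorem ofReal_inv_eq_lintegral_exp_neg_mul {c : ℝ} (hc : 0 < c) :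
    ENNReal.ofReal c⁻¹ = ∫⁻ t in Ioi (0 : ℝ), ENNReal.ofReal (exp (-(c * t))) := by
  simpa [rpow_neg_one] using (lintegral_rpow_mul_exp_neg_mul_Ioi one_pos hc).symm

theorem sin_pi_mul_pos {s : ℝ} (hs0 : 0 < s) (hs1 : s < 1) : 0 < sin (π * s) :=
  sin_pos_of_pos_of_lt_pi (by positivity) (mul_lt_of_lt_one_right pi_pos hs1)

section StieltjesIntegral

variable {s a : ℝ}

theorem lintegral_rpow_mul_inv_add_Ioi (hs0 : 0 < s) (hs1 : s < 1) (ha : 0 < a) :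
    ∫⁻ m in Ioi (0 : ℝ), ENNReal.ofReal (m ^ (s - 1) * (a + m)⁻¹) =
      ENNReal.ofReal (a ^ (s - 1) * (π / sin (π * s))) := by
  have hΓ : 0 ≤ Gamma s := (Gamma_pos_of_pos hs0).le
  calc ∫⁻ m in Ioi (0 : ℝ), ENNReal.ofReal (m ^ (s - 1) * (a + m)⁻¹)
      = ∫⁻ m in Ioi (0 : ℝ), ∫⁻ t in Ioi (0 : ℝ),
          ENNReal.ofReal (m ^ (s - 1)) * ENNReal.ofReal (exp (-((a + m) * t))) := by
        refine setLIntegral_congr_fun measurableSet_Ioi fun m hm => ?_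
        rw [ENNReal.ofReal_mul (rpow_nonneg (le_of_lt hm) _),
          ofReal_inv_eq_lintegral_exp_neg_mul (add_pos ha hm),
          lintegral_const_mul' _ _ ENNReal.ofReal_ne_top]
    _ = ∫⁻ t in Ioi (0 : ℝ), ∫⁻ m in Ioi (0 : ℝ),
          ENNReal.ofReal (m ^ (s - 1)) * ENNReal.ofReal (exp (-((a + m) * t))) :=
        lintegral_lintegral_swap (by fun_prop)
    _ = ∫⁻ t in Ioi (0 : ℝ),
          ENNReal.ofReal (Gamma s) * ENNReal.ofReal (t ^ ((1 - s) - 1) * exp (-(a * t))) := by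
        refine setLIntegral_congr_fun measurableSet_Ioi fun t ht => ?_
        have hsplit : ∀ m : ℝ,
            ENNReal.ofReal (m ^ (s - 1)) * ENNReal.ofReal (exp (-((a + m) * t))) =
              ENNReal.ofReal (exp (-(a * t))) *
                ENNReal.ofReal (m ^ (s - 1) * exp (-(t * m))) := fun m => by
          rw [← ENNReal.ofReal_mul (exp_pos _).le, ← ENNReal.ofReal_mul' (exp_pos _).le,
            ← mul_assoc, mul_comm (exp _), mul_assoc, ← exp_add]
          ring_nf
        simp_rw [hsplit]
        rw [lintegral_const_mul' _ _ ENNReal.ofReal_ne_top,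
          lintegral_rpow_mul_exp_neg_mul_Ioi hs0 ht, ← ENNReal.ofReal_mul (exp_pos _).le,
          ← ENNReal.ofReal_mul hΓ]
        ring_nf
    _ = ENNReal.ofReal (a ^ (s - 1) * (π / sin (π * s))) := by
        rw [lintegral_const_mul' _ _ ENNReal.ofReal_ne_top,
          lintegral_rpow_mul_exp_neg_mul_Ioi (sub_pos.2 hs1) ha, ← ENNReal.ofReal_mul hΓ,
          ← Gamma_mul_Gamma_one_sub, neg_sub]
        ring_nf

theorem rpow_mul_inv_add_nonneg_ae (ha : 0 ≤ a) :
    0 ≤ᵐ[volume.restrict (Ioi 0)] fun m : ℝ => m ^ (s - 1) * (a + m)⁻¹ := by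
  filter_upwards [ae_restrict_mem measurableSet_Ioi] with m (hm : 0 < m)
  positivity

theorem integrableOn_rpow_mul_inv_add_Ioi (hs0 : 0 < s) (hs1 : s < 1) (ha : 0 < a) :
    IntegrableOn (fun m : ℝ => m ^ (s - 1) * (a + m)⁻¹) (Ioi 0) := by
  refine (lintegral_ofReal_ne_top_iff_integrable (by fun_prop)
    (rpow_mul_inv_add_nonneg_ae ha.le)).1 ?_
  rw [lintegral_rpow_mul_inv_add_Ioi hs0 hs1 ha]
  exact ENNReal.ofReal_ne_top

theorem integral_rpow_mul_inv_add_Ioi (hs0 : 0 < s) (hs1 : s < 1) (ha : 0 < a) :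
    ∫ m in Ioi (0 : ℝ), m ^ (s - 1) * (a + m)⁻¹ = a ^ (s - 1) * (π / sin (π * s)) := by
  have hsin := sin_pi_mul_pos hs0 hs1
  rw [integral_eq_lintegral_of_nonneg_ae (rpow_mul_inv_add_nonneg_ae ha.le) (by fun_prop),
    lintegral_rpow_mul_inv_add_Ioi hs0 hs1 ha, ENNReal.toReal_ofReal (by positivity)]

end StieltjesIntegral

theorem sub_mul_rpow_mul_inv_add_mul_inv_add {s a b m : ℝ} (hm : 0 < m) (ha : a + m ≠ 0)
    (hb : b + m ≠ 0) :
    (a - b) * (m ^ s * (a + m)⁻¹ * (b + m)⁻¹) =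
      a * (m ^ (s - 1) * (a + m)⁻¹) - b * (m ^ (s - 1) * (b + m)⁻¹) := by
  rw [rpow_sub_one hm.ne']
  field_simp
  ring

/-- scalar shadow of the Balakrishnan commutator formula: for `σ ∈ (0,1)`
and `λ, μ > 0`,
`λ^σ - μ^σ = (sin(πσ)/π)(λ - μ) ∫_0^∞ m^σ (λ+m)⁻¹(μ+m)⁻¹ dm`. -/
theorem stmt11 (σ lam mu : ℝ) (hσ0 : 0 < σ) (hσ1 : σ < 1)
    (hlam : 0 < lam) (hmu : 0 < mu) :
    lam ^ σ - mu ^ σ = (Real.sin (Real.pi * σ) / Real.pi) * (lam - mu) *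
      ∫ m in Set.Ioi (0 : ℝ), m ^ σ * (lam + m)⁻¹ * (mu + m)⁻¹ := by
  have hsin := sin_pi_mul_pos hσ0 hσ1
  have hsub_mul : (lam - mu) * ∫ m in Ioi (0 : ℝ), m ^ σ * (lam + m)⁻¹ * (mu + m)⁻¹ =
      (lam ^ σ - mu ^ σ) * (π / sin (π * σ)) := by
    rw [← integral_const_mul, setIntegral_congr_fun measurableSet_Ioi fun m (hm : 0 < m) =>
        sub_mul_rpow_mul_inv_add_mul_inv_add hm (by positivity) (by positivity),
      integral_sub ((integrableOn_rpow_mul_inv_add_Ioi hσ0 hσ1 hlam).const_mul lam)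
        ((integrableOn_rpow_mul_inv_add_Ioi hσ0 hσ1 hmu).const_mul mu),
      integral_const_mul, integral_const_mul, integral_rpow_mul_inv_add_Ioi hσ0 hσ1 hlam,
      integral_rpow_mul_inv_add_Ioi hσ0 hσ1 hmu, rpow_sub_one hlam.ne', rpow_sub_one hmu.ne']
    field_simp
  rw [mul_assoc, hsub_mul]
  field_simp
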